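/- arXiv:1009.5361 — 4 statements merged into one kernel-verified Lean document; each statement's English description precedes it below -/
import Mathlib

section
/- In the group P = ⟨a, b ∣ [a⁻¹,b][a,b⁻¹]⟩ (the quotient of the free group on a, b by the normal closure of the single relator a⁻¹bab⁻¹·ab⁻¹a⁻¹b), the element (ab⁻¹)² is central; that is, (ab⁻¹)² commutes with every element of P. -/
/-- The single relator `[a⁻¹,b][a,b⁻¹] = a⁻¹bab⁻¹ · ab⁻¹a⁻¹b` in the free group on two
generators `a = FreeGroup.of 0`, `b = FreeGroup.of 1`. -/
def whiteheadRel : Set (FreeGroup (Fin 2)) :=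
  {(FreeGroup.of 0)⁻¹ * FreeGroup.of 1 * FreeGroup.of 0 * (FreeGroup.of 1)⁻¹ *
    (FreeGroup.of 0 * (FreeGroup.of 1)⁻¹ * (FreeGroup.of 0)⁻¹ * FreeGroup.of 1)}

/-- In the group `P = ⟨a, b ∣ [a⁻¹,b][a,b⁻¹]⟩`, the element `(a b⁻¹)²` is central. -/
theorem whitehead_sq_central :
    ∀ g : PresentedGroup whiteheadRel,
      g * (PresentedGroup.of (rels := whiteheadRel) 0 *
            (PresentedGroup.of (rels := whiteheadRel) 1)⁻¹) ^ 2
        = (PresentedGroup.of (rels := whiteheadRel) 0 *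
            (PresentedGroup.of (rels := whiteheadRel) 1)⁻¹) ^ 2 * g := by
  intro g
  set a : PresentedGroup whiteheadRel := PresentedGroup.of 0 with ha
  set b : PresentedGroup whiteheadRel := PresentedGroup.of 1 with hb
  have hrel : a⁻¹ * b * a * b⁻¹ * (a * b⁻¹ * a⁻¹ * b) = 1 :=
    (QuotientGroup.eq_one_iff _).mpr (Subgroup.subset_normalClosure rfl)
  have key : a * b⁻¹ * (a * b⁻¹) = b⁻¹ * a * (b⁻¹ * a) := by
    calc a * b⁻¹ * (a * b⁻¹)
        = (b⁻¹ * a) * (a⁻¹ * b * a * b⁻¹ * (a * b⁻¹ * a⁻¹ * b)) * (b⁻¹ * a) := by group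
      _ = b⁻¹ * a * (b⁻¹ * a) := by rw [hrel]; group
  have hg : g ∈ Subgroup.centralizer {(a * b⁻¹) ^ 2} := by
    refine PresentedGroup.generated_by whiteheadRel _ (fun j => ?_) g
    rw [Subgroup.mem_centralizer_iff]
    rintro h rfl
    fin_cases j
    · show (a * b⁻¹) ^ 2 * a = a * (a * b⁻¹) ^ 2
      rw [sq]
      nth_rewrite 2 [key]
      group
    · show (a * b⁻¹) ^ 2 * b = b * (a * b⁻¹) ^ 2
      rw [sq]
      nth_rewrite 2 [key]
      group
  exact (Subgroup.mem_centralizer_iff.mp hg _ rfl).symm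
end

section
/- Let H be a subgroup of SU(2) which is not commutative. Then the centralizer of H in SU(2) is exactly {I, −I}, the center of SU(2). -/
open Matrix

lemma comm_of_commute_nonscalar (x y z : Matrix (Fin 2) (Fin 2) ℂ)
    (hns : x 0 1 ≠ 0 ∨ x 1 0 ≠ 0 ∨ x 0 0 ≠ x 1 1)
    (hy : x * y = y * x) (hz : x * z = z * x) : y * z = z * y := by
  have e1 := congrFun (congrFun hy 0) 0
  have e2 := congrFun (congrFun hy 0) 1
  have e3 := congrFun (congrFun hy 1) 0
  have f1 := congrFun (congrFun hz 0) 0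
  have f2 := congrFun (congrFun hz 0) 1
  have f3 := congrFun (congrFun hz 1) 0
  simp only [Matrix.mul_apply, Fin.sum_univ_two] at e1 e2 e3 f1 f2 f3
  rcases hns with hb | hc | had
  · have hr : y 1 0 = x 1 0 * y 0 1 / x 0 1 := by
      field_simp; first | linear_combination e1 | linear_combination -e1
    have hs : y 1 1 = y 0 0 + (x 1 1 - x 0 0) * y 0 1 / x 0 1 := by
      field_simp; first | linear_combination e2 | linear_combination -e2
    have hr' : z 1 0 = x 1 0 * z 0 1 / x 0 1 := by
      field_simp; first | linear_combination f1 | linear_combination -f1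
    have hs' : z 1 1 = z 0 0 + (x 1 1 - x 0 0) * z 0 1 / x 0 1 := by
      field_simp; first | linear_combination f2 | linear_combination -f2
    ext i j
    fin_cases i <;> fin_cases j <;>
      simp only [Matrix.mul_apply, Fin.sum_univ_two, Fin.mk_zero, Fin.mk_one,
        hr, hs, hr', hs'] <;>
      ring
  · have hq : y 0 1 = x 0 1 * y 1 0 / x 1 0 := by
      field_simp; first | linear_combination e1 | linear_combination -e1
    have hs : y 1 1 = y 0 0 + (x 1 1 - x 0 0) * y 1 0 / x 1 0 := by
      field_simp; first | linear_combination e3 | linear_combination -e3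
    have hq' : z 0 1 = x 0 1 * z 1 0 / x 1 0 := by
      field_simp; first | linear_combination f1 | linear_combination -f1
    have hs' : z 1 1 = z 0 0 + (x 1 1 - x 0 0) * z 1 0 / x 1 0 := by
      field_simp; first | linear_combination f3 | linear_combination -f3
    ext i j
    fin_cases i <;> fin_cases j <;>
      simp only [Matrix.mul_apply, Fin.sum_univ_two, Fin.mk_zero, Fin.mk_one,
        hq, hs, hq', hs'] <;>
      ring
  · have hd : x 0 0 - x 1 1 ≠ 0 := sub_ne_zero.mpr had
    have hq : y 0 1 = (x 0 1 * (y 0 0 - y 1 1)) / (x 0 0 - x 1 1) := by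
      field_simp; first | linear_combination e2 | linear_combination -e2
    have hr : y 1 0 = (x 1 0 * (y 0 0 - y 1 1)) / (x 0 0 - x 1 1) := by
      field_simp; first | linear_combination e3 | linear_combination -e3
    have hq' : z 0 1 = (x 0 1 * (z 0 0 - z 1 1)) / (x 0 0 - x 1 1) := by
      field_simp; first | linear_combination f2 | linear_combination -f2
    have hr' : z 1 0 = (x 1 0 * (z 0 0 - z 1 1)) / (x 0 0 - x 1 1) := by
      field_simp; first | linear_combination f3 | linear_combination -f3
    ext i j
    fin_cases i <;> fin_cases j <;>
      simp only [Matrix.mul_apply, Fin.sum_univ_two, Fin.mk_zero, Fin.mk_one,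
        hq, hr, hq', hr'] <;>
      ring

lemma SU2.det_eq_one (x : specialUnitaryGroup (Fin 2) ℂ) :
    (x : Matrix (Fin 2) (Fin 2) ℂ).det = 1 := (Submonoid.mem_inf.mp x.2).2

lemma SU2.nonscalar (x : specialUnitaryGroup (Fin 2) ℂ)
    (h1 : (x : Matrix (Fin 2) (Fin 2) ℂ) ≠ 1)
    (h2 : (x : Matrix (Fin 2) (Fin 2) ℂ) ≠ -1) :
    (x : Matrix (Fin 2) (Fin 2) ℂ) 0 1 ≠ 0 ∨
    (x : Matrix (Fin 2) (Fin 2) ℂ) 1 0 ≠ 0 ∨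
    (x : Matrix (Fin 2) (Fin 2) ℂ) 0 0 ≠ (x : Matrix (Fin 2) (Fin 2) ℂ) 1 1 := by
  set M := (x : Matrix (Fin 2) (Fin 2) ℂ) with hM
  by_contra h
  push_neg at h
  obtain ⟨hb, hc, hd⟩ := h
  have hdet : M.det = 1 := SU2.det_eq_one x
  rw [Matrix.det_fin_two, hb, hc, ← hd] at hdet
  have : M 0 0 * M 0 0 = 1 := by linear_combination hdet
  rcases mul_self_eq_one_iff.mp this with h | h
  · apply h1
    ext i j
    fin_cases i <;> fin_cases j <;>
      simp_all [Matrix.one_apply, Fin.mk_zero, Fin.mk_one, ← hd]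
  · apply h2
    ext i j
    fin_cases i <;> fin_cases j <;>
      simp_all [Matrix.one_apply, Fin.mk_zero, Fin.mk_one, ← hd]

/-- `Matrix.specialUnitaryGroup (Fin 2) ℂ` is a group (inverse given by conjugate transpose). -/
instance SU2.instGroup : Group (specialUnitaryGroup (Fin 2) ℂ) :=
  { (inferInstance : Monoid (specialUnitaryGroup (Fin 2) ℂ)) with
    inv := fun x => ⟨star (x : Matrix (Fin 2) (Fin 2) ℂ), by
      refine Submonoid.mem_inf.mpr ⟨Unitary.star_mem (Submonoid.mem_inf.mp x.2).1, ?_⟩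
      have hdet : (x : Matrix (Fin 2) (Fin 2) ℂ).det = 1 :=
        (Submonoid.mem_inf.mp x.2).2
      simp [MonoidHom.mem_mker, Matrix.detMonoidHom, star_eq_conjTranspose,
        Matrix.det_conjTranspose, hdet]⟩
    inv_mul_cancel := fun x => Subtype.ext <| by
      exact (Unitary.mem_iff.mp (Submonoid.mem_inf.mp x.2).1).1 }

/-- The centralizer in `SU(2)` of any non-abelian subgroup `H ≤ SU(2)` is exactly
`{I, -I}`, the center of `SU(2)`. -/
theorem centralizer_of_nonabelian_subgroup
    (H : Subgroup (specialUnitaryGroup (Fin 2) ℂ))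
    (hH : ¬ ∀ x ∈ H, ∀ y ∈ H, x * y = y * x) :
    ∀ x : specialUnitaryGroup (Fin 2) ℂ,
      x ∈ Subgroup.centralizer (H : Set (specialUnitaryGroup (Fin 2) ℂ)) ↔
        ((x : Matrix (Fin 2) (Fin 2) ℂ) = 1 ∨ (x : Matrix (Fin 2) (Fin 2) ℂ) = -1) := by
  intro x
  constructor
  · intro hx
    by_contra hcon
    push_neg at hcon
    obtain ⟨h1, h2⟩ := hcon
    push_neg at hH
    obtain ⟨a, ha, b, hb, hab⟩ := hH
    have hxa : a * x = x * a := Subgroup.mem_centralizer_iff.mp hx a ha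
    have hxb : b * x = x * b := Subgroup.mem_centralizer_iff.mp hx b hb
    have hxa' : (x : Matrix (Fin 2) (Fin 2) ℂ) * a = (a : Matrix (Fin 2) (Fin 2) ℂ) * x :=
      (Subtype.ext_iff.mp hxa).symm
    have hxb' : (x : Matrix (Fin 2) (Fin 2) ℂ) * b = (b : Matrix (Fin 2) (Fin 2) ℂ) * x :=
      (Subtype.ext_iff.mp hxb).symm
    exact hab (Subtype.ext (comm_of_commute_nonscalar x a b
      (SU2.nonscalar x h1 h2) hxa' hxb'))
  · intro h
    refine Subgroup.mem_centralizer_iff.mpr fun g _ => Subtype.ext ?_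
    show (g : Matrix (Fin 2) (Fin 2) ℂ) * x = (x : Matrix (Fin 2) (Fin 2) ℂ) * g
    rcases h with h | h <;> rw [h] <;> simp
end

section
/- Let P = ⟨a, b ∣ [a⁻¹,b][a,b⁻¹]⟩ and let ρ : P → SU(2) be a group homomorphism whose image is a non-commutative subgroup of SU(2). Then ρ((ab⁻¹)²) = I or ρ((ab⁻¹)²) = −I. -/
open Matrix

/-- Auxiliary algebraic identities for 2×2 matrix centralizer computations, in the case where
the `(0,1)` entry of the common matrix `Z = [[a,b],[c,d]]` is nonzero.
Here `U = [[e,f],[g,h]]` and `V = [[e',f'],[g',h']]`. -/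
lemma su2aux_b (a b c d e f g h e' f' g' h' : ℂ) (hb : b ≠ 0)
    (A1 : f * c = b * g) (A2 : b * (e - h) = f * (a - d))
    (A1' : f' * c = b * g') (A2' : b * (e' - h') = f' * (a - d)) :
    f * g' = f' * g ∧ e * f' + f * h' = e' * f + f' * h ∧
      g * e' + h * g' = g' * e + h' * g := by
  refine ⟨?_, ?_, ?_⟩
  · have h1 : b * (f * g') = b * (f' * g) := by linear_combination f' * A1 - f * A1'
    exact mul_left_cancel₀ hb h1
  · have h1 : b * (e * f' + f * h') = b * (e' * f + f' * h) := by
      linear_combination f' * A2 - f * A2'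
    exact mul_left_cancel₀ hb h1
  · have h1 : b ^ 2 * (g * e' + h * g') = b ^ 2 * (g' * e + h' * g) := by
      linear_combination (-(b * (e' - h'))) * A1 + (b * (e - h)) * A1' +
        (f * c) * A2' + (-(f' * c)) * A2
    exact mul_left_cancel₀ (pow_ne_zero 2 hb) h1

/-- Auxiliary algebraic identities for 2×2 matrix centralizer computations, in the case where
the diagonal entries of the common matrix `Z = [[a,b],[c,d]]` differ. -/
lemma su2aux_ad (a b c d e f g h e' f' g' h' : ℂ) (had : a - d ≠ 0)
    (A2 : b * (e - h) = f * (a - d)) (A3 : g * (a - d) = c * (e - h))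
    (A2' : b * (e' - h') = f' * (a - d)) (A3' : g' * (a - d) = c * (e' - h')) :
    f * g' = f' * g ∧ e * f' + f * h' = e' * f + f' * h ∧
      g * e' + h * g' = g' * e + h' * g := by
  refine ⟨?_, ?_, ?_⟩
  · have h1 : (a - d) ^ 2 * (f * g') = (a - d) ^ 2 * (f' * g) := by
      linear_combination (-( (a-d) * g')) * A2 + ((a-d) * g) * A2' +
        (b * (e - h)) * A3' + (-(b * (e' - h'))) * A3
    exact mul_left_cancel₀ (pow_ne_zero 2 had) h1
  · have h1 : (a - d) * (e * f' + f * h') = (a - d) * (e' * f + f' * h) := by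
      linear_combination (e' - h') * A2 - (e - h) * A2'
    exact mul_left_cancel₀ had h1
  · have h1 : (a - d) * (g * e' + h * g') = (a - d) * (g' * e + h' * g) := by
      linear_combination (e' - h') * A3 - (e - h) * A3'
    exact mul_left_cancel₀ had h1

/-- Two matrices commuting with a common non-scalar 2×2 matrix commute with each other. -/
lemma comm_of_commute_nonscalar_s5 (Z U V : Matrix (Fin 2) (Fin 2) ℂ)
    (hU : U * Z = Z * U) (hV : V * Z = Z * V)
    (hZ : Z 0 1 ≠ 0 ∨ Z 1 0 ≠ 0 ∨ Z 0 0 ≠ Z 1 1) : U * V = V * U := by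
  have eU := fun i j => Matrix.ext_iff.mpr hU i j
  have eV := fun i j => Matrix.ext_iff.mpr hV i j
  simp only [Matrix.mul_apply, Fin.sum_univ_two] at eU eV
  have A1 : U 0 1 * Z 1 0 = Z 0 1 * U 1 0 := by linear_combination eU 0 0
  have A2 : Z 0 1 * (U 0 0 - U 1 1) = U 0 1 * (Z 0 0 - Z 1 1) := by linear_combination eU 0 1
  have A3 : U 1 0 * (Z 0 0 - Z 1 1) = Z 1 0 * (U 0 0 - U 1 1) := by linear_combination eU 1 0
  have A1' : V 0 1 * Z 1 0 = Z 0 1 * V 1 0 := by linear_combination eV 0 0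
  have A2' : Z 0 1 * (V 0 0 - V 1 1) = V 0 1 * (Z 0 0 - Z 1 1) := by linear_combination eV 0 1
  have A3' : V 1 0 * (Z 0 0 - Z 1 1) = Z 1 0 * (V 0 0 - V 1 1) := by linear_combination eV 1 0
  have key : U 0 1 * V 1 0 = V 0 1 * U 1 0 ∧
      U 0 0 * V 0 1 + U 0 1 * V 1 1 = V 0 0 * U 0 1 + V 0 1 * U 1 1 ∧
      U 1 0 * V 0 0 + U 1 1 * V 1 0 = V 1 0 * U 0 0 + V 1 1 * U 1 0 := by
    rcases hZ with hb | hc | had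
    · exact su2aux_b (Z 0 0) (Z 0 1) (Z 1 0) (Z 1 1) (U 0 0) (U 0 1) (U 1 0) (U 1 1)
        (V 0 0) (V 0 1) (V 1 0) (V 1 1) hb A1 A2 A1' A2'
    · obtain ⟨k1, k2, k3⟩ := su2aux_b (Z 0 0) (Z 1 0) (Z 0 1) (Z 1 1)
        (U 0 0) (U 1 0) (U 0 1) (U 1 1) (V 0 0) (V 1 0) (V 0 1) (V 1 1) hc
        (by linear_combination -A1) (by linear_combination -A3)
        (by linear_combination -A1') (by linear_combination -A3')
      exact ⟨by linear_combination -k1, by linear_combination -k3, by linear_combination -k2⟩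
    · exact su2aux_ad (Z 0 0) (Z 0 1) (Z 1 0) (Z 1 1) (U 0 0) (U 0 1) (U 1 0) (U 1 1)
        (V 0 0) (V 0 1) (V 1 0) (V 1 1) (sub_ne_zero.mpr had) A2 A3 A2' A3'
  obtain ⟨G1, G2, G3⟩ := key
  ext i j
  fin_cases i <;> fin_cases j <;>
    simp only [Matrix.mul_apply, Fin.sum_univ_two, Fin.mk_zero, Fin.mk_one, Fin.isValue] <;>
    [linear_combination G1; linear_combination G2; linear_combination G3;
     linear_combination -G1]

/-- If `ρ : P → SU(2)` has non-abelian image, where `P = ⟨a, b ∣ [a⁻¹,b][a,b⁻¹]⟩`, then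
`ρ((ab⁻¹)²) = I` or `ρ((ab⁻¹)²) = -I`. -/
theorem nonabelian_rep_central_elt
    (ρ : PresentedGroup whiteheadRel →* specialUnitaryGroup (Fin 2) ℂ)
    (hρ : ¬ ∀ x ∈ ρ.range, ∀ y ∈ ρ.range, x * y = y * x) :
    ((ρ ((PresentedGroup.of (rels := whiteheadRel) 0 *
        (PresentedGroup.of (rels := whiteheadRel) 1)⁻¹) ^ 2) :
          Matrix (Fin 2) (Fin 2) ℂ) = 1)
    ∨ ((ρ ((PresentedGroup.of (rels := whiteheadRel) 0 *
        (PresentedGroup.of (rels := whiteheadRel) 1)⁻¹) ^ 2) :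
          Matrix (Fin 2) (Fin 2) ℂ) = -1) := by
  set A : specialUnitaryGroup (Fin 2) ℂ := ρ (PresentedGroup.of (rels := whiteheadRel) 0) with hAdef
  set B : specialUnitaryGroup (Fin 2) ℂ := ρ (PresentedGroup.of (rels := whiteheadRel) 1) with hBdef
  -- the relator maps to 1 in the presented group
  have hrel : (PresentedGroup.of (rels := whiteheadRel) 0)⁻¹ *
      PresentedGroup.of (rels := whiteheadRel) 1 * PresentedGroup.of (rels := whiteheadRel) 0 *
      (PresentedGroup.of (rels := whiteheadRel) 1)⁻¹ *
      (PresentedGroup.of (rels := whiteheadRel) 0 *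
        (PresentedGroup.of (rels := whiteheadRel) 1)⁻¹ *
        (PresentedGroup.of (rels := whiteheadRel) 0)⁻¹ *
        PresentedGroup.of (rels := whiteheadRel) 1) = 1 := by
    have hmem : ((FreeGroup.of 0)⁻¹ * FreeGroup.of 1 * FreeGroup.of 0 * (FreeGroup.of 1)⁻¹ *
        (FreeGroup.of 0 * (FreeGroup.of 1)⁻¹ * (FreeGroup.of 0)⁻¹ * FreeGroup.of 1) :
          FreeGroup (Fin 2)) ∈ Subgroup.normalClosure whiteheadRel :=
      Subgroup.subset_normalClosure rfl
    have h1 : PresentedGroup.mk whiteheadRel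
        ((FreeGroup.of 0)⁻¹ * FreeGroup.of 1 * FreeGroup.of 0 * (FreeGroup.of 1)⁻¹ *
        (FreeGroup.of 0 * (FreeGroup.of 1)⁻¹ * (FreeGroup.of 0)⁻¹ * FreeGroup.of 1)) = 1 :=
      (QuotientGroup.eq_one_iff _).mpr hmem
    simpa only [_root_.map_mul, _root_.map_inv, PresentedGroup.of] using h1
  have hρrel : A⁻¹ * B * A * B⁻¹ * (A * B⁻¹ * A⁻¹ * B) = 1 := by
    simpa only [_root_.map_mul, _root_.map_inv, _root_.map_one] using congrArg ρ hrel
  -- the square of A * B⁻¹ commutes with A and B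
  have hsq : (A * B⁻¹) * (A * B⁻¹) = (B⁻¹ * A) * (B⁻¹ * A) := by
    calc (A * B⁻¹) * (A * B⁻¹)
        = (B⁻¹ * A) * (A⁻¹ * B * A * B⁻¹ * (A * B⁻¹ * A⁻¹ * B)) * (B⁻¹ * A) := by group
      _ = (B⁻¹ * A) * (B⁻¹ * A) := by rw [hρrel]; group
  have hcB : (A * B⁻¹) * (A * B⁻¹) * B = B * ((A * B⁻¹) * (A * B⁻¹)) := by
    calc (A * B⁻¹) * (A * B⁻¹) * B = B * ((B⁻¹ * A) * (B⁻¹ * A)) := by group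
      _ = B * ((A * B⁻¹) * (A * B⁻¹)) := by rw [hsq]
  have hcA : (A * B⁻¹) * (A * B⁻¹) * A = A * ((A * B⁻¹) * (A * B⁻¹)) := by
    calc (A * B⁻¹) * (A * B⁻¹) * A
        = (A * B⁻¹) * ((A * B⁻¹) * (A * B⁻¹) * B) := by group
      _ = (A * B⁻¹) * (B * ((A * B⁻¹) * (A * B⁻¹))) := by rw [hcB]
      _ = A * ((A * B⁻¹) * (A * B⁻¹)) := by group
  -- every element of the image commutes with Z := (A * B⁻¹)²
  have hall : ∀ p : PresentedGroup whiteheadRel,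
      ρ p * ((A * B⁻¹) * (A * B⁻¹)) = ((A * B⁻¹) * (A * B⁻¹)) * ρ p := by
    intro p
    have hp : p ∈ Subgroup.comap ρ (Subgroup.centralizer {(A * B⁻¹) * (A * B⁻¹)}) := by
      refine PresentedGroup.generated_by _ _ (fun j => ?_) p
      refine Subgroup.mem_comap.mpr (Subgroup.mem_centralizer_singleton_iff.mpr ?_)
      fin_cases j <;> simp only [Fin.zero_eta, Fin.mk_one, Fin.isValue] <;>
        [exact hcA.symm; exact hcB.symm]
    exact Subgroup.mem_centralizer_singleton_iff.mp (Subgroup.mem_comap.mp hp)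
  -- rewrite the goal element
  have hZeq : ρ ((PresentedGroup.of (rels := whiteheadRel) 0 *
      (PresentedGroup.of (rels := whiteheadRel) 1)⁻¹) ^ 2) = (A * B⁻¹) * (A * B⁻¹) := by
    rw [pow_two, _root_.map_mul, _root_.map_mul, _root_.map_inv]
  rw [hZeq]
  set Zsu : specialUnitaryGroup (Fin 2) ℂ := (A * B⁻¹) * (A * B⁻¹) with hZdef
  set Zm : Matrix (Fin 2) (Fin 2) ℂ := (Zsu : Matrix (Fin 2) (Fin 2) ℂ) with hZmdef
  -- get two non-commuting elements of the image
  push_neg at hρ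
  obtain ⟨x, hx, y, hy, hxy⟩ := hρ
  obtain ⟨p, rfl⟩ := hx
  obtain ⟨q, rfl⟩ := hy
  have hU : ((ρ p : specialUnitaryGroup (Fin 2) ℂ) : Matrix (Fin 2) (Fin 2) ℂ) * Zm =
      Zm * ((ρ p : specialUnitaryGroup (Fin 2) ℂ) : Matrix (Fin 2) (Fin 2) ℂ) :=
    congrArg Subtype.val (hall p)
  have hV : ((ρ q : specialUnitaryGroup (Fin 2) ℂ) : Matrix (Fin 2) (Fin 2) ℂ) * Zm =
      Zm * ((ρ q : specialUnitaryGroup (Fin 2) ℂ) : Matrix (Fin 2) (Fin 2) ℂ) :=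
    congrArg Subtype.val (hall q)
  have hUV : ((ρ p : specialUnitaryGroup (Fin 2) ℂ) : Matrix (Fin 2) (Fin 2) ℂ) *
      ((ρ q : specialUnitaryGroup (Fin 2) ℂ) : Matrix (Fin 2) (Fin 2) ℂ) ≠
      ((ρ q : specialUnitaryGroup (Fin 2) ℂ) : Matrix (Fin 2) (Fin 2) ℂ) *
      ((ρ p : specialUnitaryGroup (Fin 2) ℂ) : Matrix (Fin 2) (Fin 2) ℂ) := by
    intro hh
    exact hxy (Subtype.ext hh)
  -- therefore Z must be scalar
  have hscal : ¬ (Zm 0 1 ≠ 0 ∨ Zm 1 0 ≠ 0 ∨ Zm 0 0 ≠ Zm 1 1) := by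
    intro hns
    exact hUV (comm_of_commute_nonscalar_s5 Zm _ _ hU hV hns)
  push_neg at hscal
  obtain ⟨h01, h10, hdiag⟩ := hscal
  -- determinant 1 forces the scalar to be ±1
  have hdet : Zm.det = 1 := by
    have := (Submonoid.mem_inf.mp Zsu.2).2
    simpa [MonoidHom.mem_mker, Matrix.detMonoidHom] using this
  rw [Matrix.det_fin_two] at hdet
  have hsq1 : (Zm 0 0 - 1) * (Zm 0 0 + 1) = 0 := by
    linear_combination hdet + Zm 0 0 * hdiag + Zm 1 0 * h01
  rcases mul_eq_zero.mp hsq1 with h | h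
  · left
    have h00 : Zm 0 0 = 1 := by linear_combination h
    have h11 : Zm 1 1 = 1 := by rw [← hdiag]; exact h00
    ext i j
    fin_cases i <;> fin_cases j <;>
      simp only [Fin.zero_eta, Fin.mk_one, Fin.isValue] <;>
      simp [Matrix.one_apply, h00, h01, h10, h11]
  · right
    have h00 : Zm 0 0 = -1 := by linear_combination h
    have h11 : Zm 1 1 = -1 := by rw [← hdiag]; exact h00
    ext i j
    fin_cases i <;> fin_cases j <;>
      simp only [Fin.zero_eta, Fin.mk_one, Fin.isValue] <;>
      simp [Matrix.one_apply, Matrix.neg_apply, h00, h01, h10, h11]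
end

section
/- Let P = ⟨a, b ∣ [a⁻¹,b][a,b⁻¹]⟩ and let ρ : P → SU(2) be a group homomorphism whose image is a non-commutative subgroup of SU(2). Then ρ(a⁻¹ba⁻¹b) = I or ρ(a⁻¹ba⁻¹b) = −I. -/
open Matrix

private lemma ch2' (a b c d : ℂ) (h : a * d - b * c = 1) :
    !![a, b; c, d] * !![a, b; c, d] = (a + d) • !![a, b; c, d] - 1 := by
  ext i j
  fin_cases i <;> fin_cases j <;>
    simp [Matrix.mul_apply, Fin.sum_univ_two, Matrix.one_apply] <;>
    (first | ring1 | linear_combination -h)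

private lemma ch2 (M : Matrix (Fin 2) (Fin 2) ℂ) (h : M.det = 1) :
    M * M = M.trace • M - 1 := by
  have h' : M 0 0 * M 1 1 - M 0 1 * M 1 0 = 1 := by rw [Matrix.det_fin_two] at h; exact h
  have key := ch2' (M 0 0) (M 0 1) (M 1 0) (M 1 1) h'
  rw [← Matrix.eta_fin_two M] at key
  rw [Matrix.trace_fin_two]
  exact key

/-- If `ρ : P → SU(2)` has non-abelian image, where `P = ⟨a, b ∣ [a⁻¹,b][a,b⁻¹]⟩`, then
`ρ(a⁻¹ b a⁻¹ b) = I` or `ρ(a⁻¹ b a⁻¹ b) = -I`. -/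
theorem nonabelian_rep_meridian
    (ρ : PresentedGroup whiteheadRel →* specialUnitaryGroup (Fin 2) ℂ)
    (hρ : ¬ ∀ x ∈ ρ.range, ∀ y ∈ ρ.range, x * y = y * x) :
    ((ρ ((PresentedGroup.of (rels := whiteheadRel) 0)⁻¹ *
        PresentedGroup.of (rels := whiteheadRel) 1 *
        (PresentedGroup.of (rels := whiteheadRel) 0)⁻¹ *
        PresentedGroup.of (rels := whiteheadRel) 1) :
          Matrix (Fin 2) (Fin 2) ℂ) = 1)
    ∨ ((ρ ((PresentedGroup.of (rels := whiteheadRel) 0)⁻¹ *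
        PresentedGroup.of (rels := whiteheadRel) 1 *
        (PresentedGroup.of (rels := whiteheadRel) 0)⁻¹ *
        PresentedGroup.of (rels := whiteheadRel) 1) :
          Matrix (Fin 2) (Fin 2) ℂ) = -1) := by
  classical
  set A := ρ (PresentedGroup.of (rels := whiteheadRel) 0) with hA
  set B := ρ (PresentedGroup.of (rels := whiteheadRel) 1) with hB
  have hrel1 : (PresentedGroup.of (rels := whiteheadRel) 0)⁻¹ *
      PresentedGroup.of (rels := whiteheadRel) 1 *
      PresentedGroup.of (rels := whiteheadRel) 0 *
      (PresentedGroup.of (rels := whiteheadRel) 1)⁻¹ *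
      (PresentedGroup.of (rels := whiteheadRel) 0 *
        (PresentedGroup.of (rels := whiteheadRel) 1)⁻¹ *
        (PresentedGroup.of (rels := whiteheadRel) 0)⁻¹ *
        PresentedGroup.of (rels := whiteheadRel) 1) = 1 := by
    exact (QuotientGroup.eq_one_iff _).mpr
      (Subgroup.subset_normalClosure (Set.mem_singleton _))
  have h1 : A⁻¹ * B * A * B⁻¹ * (A * B⁻¹ * A⁻¹ * B) = 1 := by
    have h := congrArg ρ hrel1
    simpa [_root_.map_mul, _root_.map_inv, ← hA, ← hB] using h
  set E := B⁻¹ * A with hE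
  have key : E * E * B = B * (E * E) := by
    have hT : (B * (E * E))⁻¹ * (E * E * B) =
        (B⁻¹ * A * B)⁻¹ * (A⁻¹ * B * A * B⁻¹ * (A * B⁻¹ * A⁻¹ * B))⁻¹ * (B⁻¹ * A * B) := by
      rw [hE]; group
    rw [h1] at hT
    simp only [inv_one, mul_one, one_mul, inv_mul_cancel] at hT
    exact (inv_mul_eq_one.mp hT).symm
  set M := (E : Matrix (Fin 2) (Fin 2) ℂ) with hM
  set N := (B : Matrix (Fin 2) (Fin 2) ℂ) with hN
  have hMN : M * M * N = N * (M * M) := by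
    have := congrArg (Subtype.val) key
    simpa [hM, hN] using this
  have hdetE : M.det = 1 := (Submonoid.mem_inf.mp E.2).2
  have hch := ch2 M hdetE
  rw [hch, sub_mul, mul_sub, one_mul, mul_one, smul_mul_assoc, mul_smul_comm] at hMN
  have h3 : M.trace • (M * N) = M.trace • (N * M) := by
    have h3' := congrArg (fun x => x + N) hMN
    simpa using h3'
  have h2 : M.trace • (M * N - N * M) = 0 := by rw [smul_sub, h3, sub_self]
  by_cases ht : M.trace = 0
  · -- meridian squared is -1
    right
    have hMM : M * M = -1 := by rw [hch, ht, zero_smul, zero_sub]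
    have hy : (A⁻¹ * B * A⁻¹ * B) * (E * E) = 1 := by rw [hE]; group
    have hgoal : ρ ((PresentedGroup.of (rels := whiteheadRel) 0)⁻¹ *
        PresentedGroup.of (rels := whiteheadRel) 1 *
        (PresentedGroup.of (rels := whiteheadRel) 0)⁻¹ *
        PresentedGroup.of (rels := whiteheadRel) 1) = A⁻¹ * B * A⁻¹ * B := by
      simp [_root_.map_mul, _root_.map_inv, ← hA, ← hB]
    rw [hgoal]
    have hc := congrArg (Subtype.val) hy
    rw [Submonoid.coe_mul] at hc
    have hEE : ((E * E : specialUnitaryGroup (Fin 2) ℂ) : Matrix (Fin 2) (Fin 2) ℂ) = -1 := by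
      rw [Submonoid.coe_mul, ← hM]; exact hMM
    rw [hEE, mul_neg_one, OneMemClass.coe_one] at hc
    exact neg_eq_iff_eq_neg.mp hc
  · -- the image would be abelian, contradiction
    exfalso
    have hMNcomm : M * N = N * M := by
      have := h2
      have h4 : M * N - N * M = 0 := by
        have h5 := congrArg (fun x => (M.trace)⁻¹ • x) h2
        simpa [smul_smul, inv_mul_cancel₀ ht] using h5
      exact sub_eq_zero.mp h4
    have hEB : E * B = B * E := Subtype.ext (by simpa [← hM, ← hN] using hMNcomm)
    have hBE : A = B * E := by rw [hE]; group
    have hABcomm : A * B = B * A := by rw [hBE, mul_assoc, hEB]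
    apply hρ
    intro x hx y hy
    obtain ⟨g, rfl⟩ := hx
    obtain ⟨h, rfl⟩ := hy
    have base : ∀ k : PresentedGroup whiteheadRel,
        Commute (ρ k) A ∧ Commute (ρ k) B := by
      intro k
      refine QuotientGroup.induction_on k ?_
      intro z
      induction z using FreeGroup.induction_on with
      | C1 =>
        constructor <;> · show Commute (ρ 1) _; rw [_root_.map_one]; exact Commute.one_left _
      | of i =>
        fin_cases i
        · exact ⟨Commute.refl A, hABcomm⟩
        · exact ⟨hABcomm.symm, Commute.refl B⟩
      | inv_of i hi =>
        have h1' : ρ (QuotientGroup.mk ((FreeGroup.of i)⁻¹) : _) =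
            (ρ (QuotientGroup.mk (FreeGroup.of i)))⁻¹ := by
          exact _root_.map_inv ρ (QuotientGroup.mk (FreeGroup.of i))
        exact ⟨h1' ▸ hi.1.inv_left, h1' ▸ hi.2.inv_left⟩
      | mul u v hu hv =>
        have h1' : ρ (QuotientGroup.mk (u * v) : _) =
            ρ (QuotientGroup.mk u) * ρ (QuotientGroup.mk v) := by
          exact _root_.map_mul ρ (QuotientGroup.mk u) (QuotientGroup.mk v)
        exact ⟨h1' ▸ hu.1.mul_left hv.1, h1' ▸ hu.2.mul_left hv.2⟩
    show Commute (ρ g) (ρ h)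
    refine QuotientGroup.induction_on h ?_
    intro z
    induction z using FreeGroup.induction_on with
    | C1 => show Commute (ρ g) (ρ 1); rw [_root_.map_one]; exact Commute.one_right _
    | of i =>
      fin_cases i
      · exact (base g).1
      · exact (base g).2
    | inv_of i hi =>
      have h1' : ρ (QuotientGroup.mk ((FreeGroup.of i)⁻¹) : _) =
          (ρ (QuotientGroup.mk (FreeGroup.of i)))⁻¹ := by exact _root_.map_inv ρ (QuotientGroup.mk (FreeGroup.of i))
      exact h1' ▸ hi.inv_right
    | mul u v hu hv =>
      have h1' : ρ (QuotientGroup.mk (u * v) : _) =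
          ρ (QuotientGroup.mk u) * ρ (QuotientGroup.mk v) := by exact _root_.map_mul ρ (QuotientGroup.mk u) (QuotientGroup.mk v)
      exact h1' ▸ hu.mul_right hv
end
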